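/- For smooth functions h₁, h₂ : ℝ → ℝ, the vector fields y_{h_i} = (1/2) y h_i' ∂_x + h_i ∂_y - (1/2) y h_i'' ∂_u on ℝ⁴ satisfy [y_{h₁}, y_{h₂}] = x_{(h₁h₂' - h₁'h₂)/2}, where x_q = q ∂_x - q' ∂_u. -/

import Mathlib

noncomputable section

abbrev P4 := ℝ × ℝ × ℝ × ℝ

def pdT (F : P4 → ℝ) (p : P4) : ℝ := deriv (fun s => F (s, p.2.1, p.2.2.1, p.2.2.2)) p.1
def pdX (F : P4 → ℝ) (p : P4) : ℝ := deriv (fun s => F (p.1, s, p.2.2.1, p.2.2.2)) p.2.1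
def pdY (F : P4 → ℝ) (p : P4) : ℝ := deriv (fun s => F (p.1, p.2.1, s, p.2.2.2)) p.2.2.1
def pdU (F : P4 → ℝ) (p : P4) : ℝ := deriv (fun s => F (p.1, p.2.1, p.2.2.1, s)) p.2.2.2

/-- The generator z_f of the ZK symmetry algebra, acting as a derivation. -/
def Zf (f : ℝ → ℝ) (F : P4 → ℝ) (p : P4) : ℝ :=
  f p.1 * pdT F p
  + (1 / 6) * (2 * p.2.1 * deriv f p.1 + p.2.2.1 ^ 2 * deriv (deriv f) p.1) * pdX F p
  + (2 * p.2.2.1 / 3) * deriv f p.1 * pdY F p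
  + (1 / 6) * (-4 * p.2.2.2 * deriv f p.1 - 2 * p.2.1 * deriv (deriv f) p.1
      - p.2.2.1 ^ 2 * deriv (deriv (deriv f)) p.1) * pdU F p

/-- The generator x_g = g ∂_x - g' ∂_u. -/
def Xg (g : ℝ → ℝ) (F : P4 → ℝ) (p : P4) : ℝ :=
  g p.1 * pdX F p - deriv g p.1 * pdU F p

/-- The generator y_h = (1/2) y h' ∂_x + h ∂_y - (1/2) y h'' ∂_u. -/
def Yh (h : ℝ → ℝ) (F : P4 → ℝ) (p : P4) : ℝ :=
  (1 / 2) * p.2.2.1 * deriv h p.1 * pdX F p + h p.1 * pdY F p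
  - (1 / 2) * p.2.2.1 * deriv (deriv h) p.1 * pdU F p

end

noncomputable section Aux

lemma wtop_ne_zero : ((⊤ : ℕ∞) : WithTop ℕ∞) ≠ 0 := by simp

def eX : P4 := (0,1,0,0)
def eY : P4 := (0,0,1,0)
def eU : P4 := (0,0,0,1)

lemma lineX_hasDerivAt (p : P4) (s : ℝ) :
    HasDerivAt (fun s : ℝ => ((p.1, s, p.2.2.1, p.2.2.2) : P4)) eX s :=
  (hasDerivAt_const _ _).prodMk ((hasDerivAt_id s).prodMk
    ((hasDerivAt_const _ _).prodMk (hasDerivAt_const _ _)))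

lemma lineY_hasDerivAt (p : P4) (s : ℝ) :
    HasDerivAt (fun s : ℝ => ((p.1, p.2.1, s, p.2.2.2) : P4)) eY s :=
  (hasDerivAt_const _ _).prodMk ((hasDerivAt_const _ _).prodMk
    ((hasDerivAt_id s).prodMk (hasDerivAt_const _ _)))

lemma lineU_hasDerivAt (p : P4) (s : ℝ) :
    HasDerivAt (fun s : ℝ => ((p.1, p.2.1, p.2.2.1, s) : P4)) eU s :=
  (hasDerivAt_const _ _).prodMk ((hasDerivAt_const _ _).prodMk
    ((hasDerivAt_const _ _).prodMk (hasDerivAt_id s)))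

lemma pdX_eq (F : P4 → ℝ) (p : P4) (hF : DifferentiableAt ℝ F p) :
    pdX F p = fderiv ℝ F p eX :=
  (hF.hasFDerivAt.comp_hasDerivAt p.2.1 (lineX_hasDerivAt p p.2.1)).deriv

lemma pdY_eq (F : P4 → ℝ) (p : P4) (hF : DifferentiableAt ℝ F p) :
    pdY F p = fderiv ℝ F p eY :=
  (hF.hasFDerivAt.comp_hasDerivAt p.2.2.1 (lineY_hasDerivAt p p.2.2.1)).deriv

lemma pdU_eq (F : P4 → ℝ) (p : P4) (hF : DifferentiableAt ℝ F p) :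
    pdU F p = fderiv ℝ F p eU :=
  (hF.hasFDerivAt.comp_hasDerivAt p.2.2.2 (lineU_hasDerivAt p p.2.2.2)).deriv

lemma pdfun_contDiff (F : P4 → ℝ) (hF : ContDiff ℝ (⊤ : ℕ∞) F) (v : P4) :
    ContDiff ℝ (⊤ : ℕ∞) (fun q => fderiv ℝ F q v) :=
  (hF.fderiv_right (by simp)).clm_apply contDiff_const

lemma D_symm (F : P4 → ℝ) (hF : ContDiff ℝ (⊤ : ℕ∞) F) (p : P4) (v w : P4) :
    fderiv ℝ (fun q => fderiv ℝ F q v) p w = fderiv ℝ (fun q => fderiv ℝ F q w) p v := by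
  have hd : ∀ y, HasFDerivAt F (fderiv ℝ F y) y := fun y =>
    (hF.differentiable wtop_ne_zero y).hasFDerivAt
  have h2 : HasFDerivAt (fderiv ℝ F) (fderiv ℝ (fderiv ℝ F) p) p :=
    (((hF.fderiv_right (by simp)).differentiable wtop_ne_zero) p).hasFDerivAt
  have hsym := second_derivative_symmetric hd h2 v w
  have e1 : fderiv ℝ (fun q => fderiv ℝ F q v) p w = fderiv ℝ (fderiv ℝ F) p w v := by
    rw [fderiv_clm_apply ((hF.fderiv_right (by simp)).differentiable wtop_ne_zero p)
      (differentiableAt_const v)]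
    simp
  have e2 : fderiv ℝ (fun q => fderiv ℝ F q w) p v = fderiv ℝ (fderiv ℝ F) p v w := by
    rw [fderiv_clm_apply ((hF.fderiv_right (by simp)).differentiable wtop_ne_zero p)
      (differentiableAt_const w)]
    simp
  rw [e1, e2, ← hsym]

lemma Yh_eq (h : ℝ → ℝ) (F : P4 → ℝ) (hF : ContDiff ℝ (⊤ : ℕ∞) F) :
    Yh h F = fun q => 1 / 2 * q.2.2.1 * deriv h q.1 * fderiv ℝ F q eX
      + h q.1 * fderiv ℝ F q eY - 1 / 2 * q.2.2.1 * deriv (deriv h) q.1 * fderiv ℝ F q eU := by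
  funext q
  rw [Yh, pdX_eq F q (hF.differentiable wtop_ne_zero q), pdY_eq F q (hF.differentiable wtop_ne_zero q),
    pdU_eq F q (hF.differentiable wtop_ne_zero q)]

lemma pdX_Yh (h : ℝ → ℝ) (F : P4 → ℝ) (hF : ContDiff ℝ (⊤ : ℕ∞) F) (p : P4) :
    pdX (Yh h F) p =
      1 / 2 * p.2.2.1 * deriv h p.1 * fderiv ℝ (fun q => fderiv ℝ F q eX) p eX
      + h p.1 * fderiv ℝ (fun q => fderiv ℝ F q eY) p eX
      - 1 / 2 * p.2.2.1 * deriv (deriv h) p.1 * fderiv ℝ (fun q => fderiv ℝ F q eU) p eX := by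
  have hG : ∀ v : P4, HasDerivAt (fun s => fderiv ℝ F ((p.1, s, p.2.2.1, p.2.2.2) : P4) v)
      (fderiv ℝ (fun q => fderiv ℝ F q v) p eX) p.2.1 := fun v => by
    have := ((pdfun_contDiff F hF v).differentiable wtop_ne_zero p).hasFDerivAt.comp_hasDerivAt p.2.1
      (lineX_hasDerivAt p p.2.1)
    exact this
  rw [Yh_eq h F hF]
  exact ((((hG eX).const_mul (1 / 2 * p.2.2.1 * deriv h p.1)).add
    ((hG eY).const_mul (h p.1))).sub
    ((hG eU).const_mul (1 / 2 * p.2.2.1 * deriv (deriv h) p.1))).deriv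

lemma pdU_Yh (h : ℝ → ℝ) (F : P4 → ℝ) (hF : ContDiff ℝ (⊤ : ℕ∞) F) (p : P4) :
    pdU (Yh h F) p =
      1 / 2 * p.2.2.1 * deriv h p.1 * fderiv ℝ (fun q => fderiv ℝ F q eX) p eU
      + h p.1 * fderiv ℝ (fun q => fderiv ℝ F q eY) p eU
      - 1 / 2 * p.2.2.1 * deriv (deriv h) p.1 * fderiv ℝ (fun q => fderiv ℝ F q eU) p eU := by
  have hG : ∀ v : P4, HasDerivAt (fun s => fderiv ℝ F ((p.1, p.2.1, p.2.2.1, s) : P4) v)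
      (fderiv ℝ (fun q => fderiv ℝ F q v) p eU) p.2.2.2 := fun v => by
    have := ((pdfun_contDiff F hF v).differentiable wtop_ne_zero p).hasFDerivAt.comp_hasDerivAt p.2.2.2
      (lineU_hasDerivAt p p.2.2.2)
    exact this
  rw [Yh_eq h F hF]
  exact ((((hG eX).const_mul (1 / 2 * p.2.2.1 * deriv h p.1)).add
    ((hG eY).const_mul (h p.1))).sub
    ((hG eU).const_mul (1 / 2 * p.2.2.1 * deriv (deriv h) p.1))).deriv

lemma pdY_Yh (h : ℝ → ℝ) (F : P4 → ℝ) (hF : ContDiff ℝ (⊤ : ℕ∞) F) (p : P4) :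
    pdY (Yh h F) p =
      1 / 2 * deriv h p.1 * fderiv ℝ F p eX
      + 1 / 2 * p.2.2.1 * deriv h p.1 * fderiv ℝ (fun q => fderiv ℝ F q eX) p eY
      + h p.1 * fderiv ℝ (fun q => fderiv ℝ F q eY) p eY
      - 1 / 2 * deriv (deriv h) p.1 * fderiv ℝ F p eU
      - 1 / 2 * p.2.2.1 * deriv (deriv h) p.1 * fderiv ℝ (fun q => fderiv ℝ F q eU) p eY := by
  have hG : ∀ v : P4, HasDerivAt (fun s => fderiv ℝ F ((p.1, p.2.1, s, p.2.2.2) : P4) v)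
      (fderiv ℝ (fun q => fderiv ℝ F q v) p eY) p.2.2.1 := fun v => by
    have := ((pdfun_contDiff F hF v).differentiable wtop_ne_zero p).hasFDerivAt.comp_hasDerivAt p.2.2.1
      (lineY_hasDerivAt p p.2.2.1)
    exact this
  rw [Yh_eq h F hF]
  have H := (((((hasDerivAt_id p.2.2.1).const_mul (1 / 2 : ℝ)).mul_const
      (deriv h p.1)).mul (hG eX)).add ((hG eY).const_mul (h p.1))).sub
    ((((hasDerivAt_id p.2.2.1).const_mul (1 / 2 : ℝ)).mul_const
      (deriv (deriv h) p.1)).mul (hG eU))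
  exact H.deriv.trans (by simp only [id_eq]; ring)

end Aux

theorem stmt5 (h₁ h₂ : ℝ → ℝ) (hh₁ : ContDiff ℝ (⊤ : ℕ∞) h₁) (hh₂ : ContDiff ℝ (⊤ : ℕ∞) h₂) :
    ∀ F : P4 → ℝ, ContDiff ℝ (⊤ : ℕ∞) F → ∀ p : P4,
      Yh h₁ (Yh h₂ F) p - Yh h₂ (Yh h₁ F) p
        = Xg (fun t => (h₁ t * deriv h₂ t - deriv h₁ t * h₂ t) / 2) F p := by
  intro F hF p
  have hq : deriv (fun t => (h₁ t * deriv h₂ t - deriv h₁ t * h₂ t) / 2) p.1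
      = (deriv h₁ p.1 * deriv h₂ p.1 + h₁ p.1 * deriv (deriv h₂) p.1
        - (deriv (deriv h₁) p.1 * h₂ p.1 + deriv h₁ p.1 * deriv h₂ p.1)) / 2 := by
    have d1 : HasDerivAt h₁ (deriv h₁ p.1) p.1 := (hh₁.differentiable wtop_ne_zero p.1).hasDerivAt
    have d2 : HasDerivAt h₂ (deriv h₂ p.1) p.1 := (hh₂.differentiable wtop_ne_zero p.1).hasDerivAt
    have c1 : ContDiff ℝ (⊤ : ℕ∞) (deriv h₁) := (hh₁.fderiv_right (by simp)).clm_apply contDiff_const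
    have c2 : ContDiff ℝ (⊤ : ℕ∞) (deriv h₂) := (hh₂.fderiv_right (by simp)).clm_apply contDiff_const
    have d1' : HasDerivAt (deriv h₁) (deriv (deriv h₁) p.1) p.1 :=
      (c1.differentiable wtop_ne_zero p.1).hasDerivAt
    have d2' : HasDerivAt (deriv h₂) (deriv (deriv h₂) p.1) p.1 :=
      (c2.differentiable wtop_ne_zero p.1).hasDerivAt
    exact (((d1.mul d2').sub (d1'.mul d2)).div_const 2).deriv
  simp only [Yh, Xg]
  rw [pdX_Yh h₂ F hF p, pdY_Yh h₂ F hF p, pdU_Yh h₂ F hF p,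
    pdX_Yh h₁ F hF p, pdY_Yh h₁ F hF p, pdU_Yh h₁ F hF p,
    pdX_eq F p (hF.differentiable wtop_ne_zero p), pdU_eq F p (hF.differentiable wtop_ne_zero p), hq,
    D_symm F hF p eX eY, D_symm F hF p eX eU, D_symm F hF p eY eU]
  ring
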